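/- arXiv:1512.05515 — 3 statements merged into one kernel-verified Lean document; each statement's English description precedes it below -/
import Mathlib

section
/- Let ∇ be a Type A connection on ℝ² whose Ricci tensor ρ (a constant symmetric 2×2 matrix) has rank one, i.e. ρ ≠ 0 and det ρ = 0. For a vector X = (X¹,X²) with ρ(X,X) ≠ 0 set α_X = (Σ_{i,j,k} ρ_{jk;i} X^i X^j X^k)² / ρ(X,X)³ and ε_X = sign(ρ(X,X)). Then for any two vectors X, Y with ρ(X,X) ≠ 0 and ρ(Y,Y) ≠ 0 one has α_X = α_Y and ε_X = ε_Y. -/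
noncomputable section

/-- Ricci tensor of the Type A connection on ℝ² with constant Christoffel symbols
`Γ i j k = Γ_{ij}^k`:  `ρ_{jk} = Σ_{i,p} (Γ_{ip}^i Γ_{jk}^p − Γ_{jp}^i Γ_{ik}^p)`. -/
def ricciA (Γ : Fin 2 → Fin 2 → Fin 2 → ℝ) (j k : Fin 2) : ℝ :=
  ∑ i, ∑ q, (Γ i q i * Γ j k q - Γ j q i * Γ i k q)

/-- Components `ρ_{jk;i}` of the covariant derivative of the Ricci tensor. -/
def nablaRicciA (Γ : Fin 2 → Fin 2 → Fin 2 → ℝ) (i j k : Fin 2) : ℝ :=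
  -∑ l, (Γ i j l * ricciA Γ l k + Γ i k l * ricciA Γ j l)

/-- `ρ(X,X)` for a tangent vector `X`. -/
def rhoQF (Γ : Fin 2 → Fin 2 → Fin 2 → ℝ) (X : Fin 2 → ℝ) : ℝ :=
  ∑ j, ∑ k, ricciA Γ j k * X j * X k

/-- `∇ρ(X,X;X)` for a tangent vector `X`. -/
def nablaRhoQF (Γ : Fin 2 → Fin 2 → Fin 2 → ℝ) (X : Fin 2 → ℝ) : ℝ :=
  ∑ i, ∑ j, ∑ k, nablaRicciA Γ i j k * X i * X j * X k

/-!
Write `ρ(Y, Z) = Y ⬝ᵥ ρ *ᵥ Z`, `∇_Y Z = Σ Γ_{ij}^l Y^i Z^j` and `J` for the rotation by a right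
angle; then `∇ρ(X,X;X) = -2 ρ(X, ∇_X X)`. Every Type A connection on ℝ² satisfies the polynomial
identity `ρ(U, ∇_{JρZ} W) = det ρ · ⟨∇_W U, J Z⟩`, so when `det ρ = 0` the vectors `k = JρZ`, which lie
in the kernel of `ρ`, satisfy `ρ(·, ∇_k ·) = 0`. Given `X` with `ρ(X,X) ≠ 0`, every `Y` splits as
`ρ(X,X) Y = ρ(X,Y) X + k` with such a `k`, and expanding gives `ρ(X,X) ρ(Y,Y) = ρ(X,Y)²` and
`ρ(X,X)³ ∇ρ(Y,Y;Y) = ρ(X,Y)³ ∇ρ(X,X;X)`, from which both invariants follow.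
-/

open Matrix

def rot90 {R : Type*} [Ring R] : Matrix (Fin 2) (Fin 2) R := !![0, -1; 1, 0]

section CommRing

variable {R : Type*} [CommRing R]

theorem smul_sub_smul_eq_rot90 (α X Y : Fin 2 → R) :
    (α ⬝ᵥ X) • Y - (α ⬝ᵥ Y) • X = (Y ⬝ᵥ rot90 *ᵥ X) • rot90 *ᵥ α := by
  ext i
  fin_cases i <;>
    simp only [dotProduct, Fin.sum_univ_two, Fin.zero_eta, Fin.mk_one, Pi.sub_apply, Pi.smul_apply,
      smul_eq_mul, mulVec, rot90, of_apply, cons_val', cons_val_fin_one, cons_val_zero,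
      cons_val_one] <;> ring

theorem Matrix.IsSymm.mulVec_dotProduct {n : Type*} [Fintype n] {B : Matrix n n R}
    (hB : B.IsSymm) (U V : n → R) : B *ᵥ U ⬝ᵥ V = U ⬝ᵥ B *ᵥ V := by
  rw [dotProduct_mulVec, ← vecMul_transpose, hB.eq]

theorem Matrix.IsSymm.mul_sub_mul_eq_det_mul {B : Matrix (Fin 2) (Fin 2) R} (hB : B.IsSymm)
    (X Y V : Fin 2 → R) :
    (X ⬝ᵥ B *ᵥ X) * (Y ⬝ᵥ B *ᵥ V) - (X ⬝ᵥ B *ᵥ Y) * (X ⬝ᵥ B *ᵥ V) =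
      B.det * (X ⬝ᵥ rot90 *ᵥ Y) * (X ⬝ᵥ rot90 *ᵥ V) := by
  have hB01 := hB.apply 0 1
  simp only [dotProduct, mulVec, Fin.sum_univ_two, det_fin_two, rot90, of_apply, cons_val',
    cons_val_fin_one, cons_val_zero, cons_val_one, zero_mul, neg_mul, one_mul, zero_add, mul_neg,
    add_zero] at hB01 ⊢
  rw [hB01]
  ring

theorem Matrix.IsSymm.mul_eq_mul_of_det_eq_zero {B : Matrix (Fin 2) (Fin 2) R} (hB : B.IsSymm)
    (hdet : B.det = 0) (X Y V : Fin 2 → R) :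
    (X ⬝ᵥ B *ᵥ X) * (Y ⬝ᵥ B *ᵥ V) = (X ⬝ᵥ B *ᵥ Y) * (X ⬝ᵥ B *ᵥ V) := by
  linear_combination hB.mul_sub_mul_eq_det_mul X Y V + hdet * (X ⬝ᵥ rot90 *ᵥ Y) * (X ⬝ᵥ rot90 *ᵥ V)

end CommRing

section TypeA

variable {Γ : Fin 2 → Fin 2 → Fin 2 → ℝ}

def ricci (Γ : Fin 2 → Fin 2 → Fin 2 → ℝ) : Matrix (Fin 2) (Fin 2) ℝ := Matrix.of (ricciA Γ)

def covDeriv (Γ : Fin 2 → Fin 2 → Fin 2 → ℝ) (Y Z : Fin 2 → ℝ) : Fin 2 → ℝ :=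
  fun l => ∑ i, ∑ j, Γ i j l * Y i * Z j

theorem rhoQF_eq_dotProduct (Γ : Fin 2 → Fin 2 → Fin 2 → ℝ) (X : Fin 2 → ℝ) :
    rhoQF Γ X = X ⬝ᵥ ricci Γ *ᵥ X := by
  simp only [rhoQF, ricci, dotProduct, mulVec, of_apply, Fin.sum_univ_two]
  ring

theorem ricciA_comm (hΓ : ∀ i j k, Γ i j k = Γ j i k) (j k : Fin 2) :
    ricciA Γ j k = ricciA Γ k j := by
  simp only [ricciA, Fin.sum_univ_two]
  fin_cases j <;> fin_cases k <;> simp only [hΓ 1 0, Fin.zero_eta, Fin.mk_one, Fin.isValue] <;> ring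

theorem ricci_isSymm (hΓ : ∀ i j k, Γ i j k = Γ j i k) : (ricci Γ).IsSymm :=
  IsSymm.ext fun j k => ricciA_comm hΓ k j

theorem covDeriv_comm (hΓ : ∀ i j k, Γ i j k = Γ j i k) (Y Z : Fin 2 → ℝ) :
    covDeriv Γ Y Z = covDeriv Γ Z Y := by
  ext l
  simp only [covDeriv, Fin.sum_univ_two, hΓ 1 0]
  ring

theorem nablaRhoQF_eq (hΓ : ∀ i j k, Γ i j k = Γ j i k) (X : Fin 2 → ℝ) :
    nablaRhoQF Γ X = -2 * (X ⬝ᵥ ricci Γ *ᵥ covDeriv Γ X X) := by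
  simp only [nablaRhoQF, nablaRicciA, ricci, covDeriv, dotProduct, mulVec, of_apply,
    Fin.sum_univ_two, ricciA_comm hΓ 1 0]
  ring

theorem dotProduct_ricci_covDeriv_rot90 (hΓ : ∀ i j k, Γ i j k = Γ j i k) (Z W U : Fin 2 → ℝ) :
    U ⬝ᵥ ricci Γ *ᵥ covDeriv Γ (rot90 *ᵥ ricci Γ *ᵥ Z) W =
      (ricci Γ).det * (covDeriv Γ W U ⬝ᵥ rot90 *ᵥ Z) := by
  simp only [dotProduct, mulVec, ricci, of_apply, ricciA, Fin.sum_univ_two, hΓ 1 0, covDeriv,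
    rot90, cons_val', cons_val_fin_one, cons_val_zero, cons_val_one, det_fin_two]
  ring

theorem rhoQF_pow_mul_nablaRhoQF (hΓ : ∀ i j k, Γ i j k = Γ j i k) (hdet : (ricci Γ).det = 0)
    (X Y : Fin 2 → ℝ) :
    rhoQF Γ X ^ 3 * nablaRhoQF Γ Y = (X ⬝ᵥ ricci Γ *ᵥ Y) ^ 3 * nablaRhoQF Γ X := by
  set ρ := ricci Γ
  set r := X ⬝ᵥ ρ *ᵥ X
  set s := X ⬝ᵥ ρ *ᵥ Y
  set k := rot90 *ᵥ ρ *ᵥ ((Y ⬝ᵥ rot90 *ᵥ X) • X) with hk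
  have hsplit : r • Y = s • X + k := by
    have h := smul_sub_smul_eq_rot90 (ρ *ᵥ X) X Y
    rw [(ricci_isSymm hΓ).mulVec_dotProduct, (ricci_isSymm hΓ).mulVec_dotProduct] at h
    rw [hk, mulVec_smul, mulVec_smul, ← h]
    abel
  have hker (V : Fin 2 → ℝ) : X ⬝ᵥ ρ *ᵥ covDeriv Γ k V = 0 := by
    rw [dotProduct_ricci_covDeriv_rot90 hΓ, hdet, zero_mul]
  have hrank := (ricci_isSymm hΓ).mul_eq_mul_of_det_eq_zero hdet X Y (covDeriv Γ Y Y)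
  have hquad : r ^ 2 * (X ⬝ᵥ ρ *ᵥ covDeriv Γ Y Y) = s ^ 2 * (X ⬝ᵥ ρ *ᵥ covDeriv Γ X X) :=
    calc r ^ 2 * (X ⬝ᵥ ρ *ᵥ covDeriv Γ Y Y) = X ⬝ᵥ ρ *ᵥ covDeriv Γ (r • Y) (r • Y) := by
          simp only [covDeriv, dotProduct, mulVec, Fin.sum_univ_two, Pi.smul_apply, smul_eq_mul]
          ring
      _ = X ⬝ᵥ ρ *ᵥ covDeriv Γ (s • X + k) (s • X + k) := by rw [hsplit]
      _ = s ^ 2 * (X ⬝ᵥ ρ *ᵥ covDeriv Γ X X) + s * (X ⬝ᵥ ρ *ᵥ covDeriv Γ X k)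
            + s * (X ⬝ᵥ ρ *ᵥ covDeriv Γ k X) + X ⬝ᵥ ρ *ᵥ covDeriv Γ k k := by
          simp only [covDeriv, dotProduct, mulVec, Fin.sum_univ_two, Pi.add_apply,
            Pi.smul_apply, smul_eq_mul]
          ring
      _ = s ^ 2 * (X ⬝ᵥ ρ *ᵥ covDeriv Γ X X) := by
          rw [covDeriv_comm hΓ X k, hker, hker]
          ring
  rw [rhoQF_eq_dotProduct, nablaRhoQF_eq hΓ, nablaRhoQF_eq hΓ]
  linear_combination (-2 * r ^ 2) * hrank + (-2 * s) * hquad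

end TypeA

theorem div_pow_three_eq_and_sign_eq {r q s m n : ℝ} (hr : r ≠ 0) (hq : q ≠ 0)
    (hrq : r * q = s ^ 2) (hmn : r ^ 3 * n = s ^ 3 * m) :
    m ^ 2 / r ^ 3 = n ^ 2 / q ^ 3 ∧ Real.sign r = Real.sign q := by
  constructor
  · rw [div_eq_div_iff (pow_ne_zero 3 hr) (pow_ne_zero 3 hq)]
    refine mul_left_cancel₀ (pow_ne_zero 3 hr) ?_
    linear_combination m ^ 2 * ((r * q) ^ 2 + r * q * s ^ 2 + s ^ 4) * hrq
      - (r ^ 3 * n + s ^ 3 * m) * hmn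
  · have hpos : 0 < r * q := lt_of_le_of_ne (hrq ▸ sq_nonneg s) (mul_ne_zero hr hq).symm
    rcases pos_and_pos_or_neg_and_neg_of_mul_pos hpos with ⟨hr', hq'⟩ | ⟨hr', hq'⟩
    · rw [Real.sign_of_pos hr', Real.sign_of_pos hq']
    · rw [Real.sign_of_neg hr', Real.sign_of_neg hq']

theorem stmt2_general (Γ : Fin 2 → Fin 2 → Fin 2 → ℝ)
    (hΓ : ∀ i j k, Γ i j k = Γ j i k)
    (hdet : ricciA Γ 0 0 * ricciA Γ 1 1 - ricciA Γ 0 1 * ricciA Γ 1 0 = 0)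
    (X Y : Fin 2 → ℝ) (hX : rhoQF Γ X ≠ 0) (hY : rhoQF Γ Y ≠ 0) :
    (nablaRhoQF Γ X) ^ 2 / (rhoQF Γ X) ^ 3 = (nablaRhoQF Γ Y) ^ 2 / (rhoQF Γ Y) ^ 3 ∧
    Real.sign (rhoQF Γ X) = Real.sign (rhoQF Γ Y) := by
  have hdet' : (ricci Γ).det = 0 := by rwa [det_fin_two]
  have hrank : rhoQF Γ X * rhoQF Γ Y = (X ⬝ᵥ ricci Γ *ᵥ Y) ^ 2 := by
    simp only [rhoQF_eq_dotProduct, sq]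
    exact (ricci_isSymm hΓ).mul_eq_mul_of_det_eq_zero hdet' X Y Y
  exact div_pow_three_eq_and_sign_eq hX hY hrank (rhoQF_pow_mul_nablaRhoQF hΓ hdet' X Y)

/-- if the Ricci tensor of a Type A connection has rank one, then
`α_X = ∇ρ(X,X;X)²/ρ(X,X)³` and `ε_X = sign ρ(X,X)` do not depend on the choice of a
vector `X` with `ρ(X,X) ≠ 0`. -/
theorem stmt2 (Γ : Fin 2 → Fin 2 → Fin 2 → ℝ)
    (hΓ : ∀ i j k, Γ i j k = Γ j i k)
    (hρ : ¬ ∀ j k, ricciA Γ j k = 0)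
    (hdet : ricciA Γ 0 0 * ricciA Γ 1 1 - ricciA Γ 0 1 * ricciA Γ 1 0 = 0)
    (X Y : Fin 2 → ℝ) (hX : rhoQF Γ X ≠ 0) (hY : rhoQF Γ Y ≠ 0) :
    (nablaRhoQF Γ X) ^ 2 / (rhoQF Γ X) ^ 3 = (nablaRhoQF Γ Y) ^ 2 / (rhoQF Γ Y) ^ 3 ∧
    Real.sign (rhoQF Γ X) = Real.sign (rhoQF Γ Y) :=
  stmt2_general Γ hΓ hdet X Y hX hY
end
end

section
/- Let ∇ be a Type A connection on ℝ² with Γ₁₁² = 0, Γ₁₂² = 0 and ρ₂₂ := Γ₁₂¹(Γ₂₂² − Γ₁₂¹) + Γ₁₁¹Γ₂₂¹ ≠ 0. (a) If Γ₁₁¹ ≠ 0, then a smooth vector field X is an affine Killing field for ∇ if and only if X = e^{−Γ₁₁¹x¹}ξ(x²)∂₁ + a∂₁ + b∂₂ for some constants a,b and a smooth function ξ satisfying ξ'' + (2Γ₁₂¹ − Γ₂₂²)ξ' + Γ₁₁¹Γ₂₂¹ξ = 0. (b) If Γ₁₁¹ = 0, then X is an affine Killing field if and only if X = (ξ(x²)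 + c₁x¹)∂₁ + a∂₁ + b∂₂ for some constants a,b,c₁ and a smooth function ξ satisfying ξ'' + (2Γ₁₂¹ − Γ₂₂²)ξ' − c₁Γ₂₂¹ = 0. -/
noncomputable section

/-- The coordinate directions of ℝ². -/
def ee : Fin 2 → ℝ × ℝ := ![(1, 0), (0, 1)]

/-- Partial derivative `∂_i f`. -/
def pd (i : Fin 2) (f : ℝ × ℝ → ℝ) : ℝ × ℝ → ℝ :=
  fun p => fderiv ℝ f p (ee i)

/-- Affine Killing vector field for a Type A connection (constant Christoffel symbols). -/
def IsKillingA (Γ : Fin 2 → Fin 2 → Fin 2 → ℝ) (X : Fin 2 → ℝ × ℝ → ℝ) : Prop :=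
  ∀ i j k : Fin 2, ∀ p : ℝ × ℝ,
    pd i (pd j (X k)) p
      + ∑ l, (Γ l j k * pd i (X l) p + Γ i l k * pd j (X l) p - Γ i j l * pd l (X k) p) = 0

lemma ee_zero : ee 0 = (1, 0) := rfl
lemma ee_one : ee 1 = (0, 1) := rfl

lemma contDiff_pd {f : ℝ × ℝ → ℝ} (hf : ContDiff ℝ (⊤ : ℕ∞) f) (i : Fin 2) :
    ContDiff ℝ (⊤ : ℕ∞) (pd i f) :=
  (hf.fderiv_right (by simp)).clm_apply contDiff_const

lemma diff_pd {f : ℝ × ℝ → ℝ} (hf : ContDiff ℝ (⊤ : ℕ∞) f) (i : Fin 2) :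
    Differentiable ℝ (pd i f) :=
  (contDiff_pd hf i).differentiable (by simp)

lemma pd_add {f g : ℝ × ℝ → ℝ} (hf : Differentiable ℝ f) (hg : Differentiable ℝ g)
    (i : Fin 2) (p : ℝ × ℝ) :
    pd i (fun q => f q + g q) p = pd i f p + pd i g p := by
  unfold pd
  rw [fderiv_fun_add (hf p) (hg p)]
  simp

lemma pd_const_mul {f : ℝ × ℝ → ℝ} (hf : Differentiable ℝ f) (c : ℝ)
    (i : Fin 2) (p : ℝ × ℝ) :
    pd i (fun q => c * f q) p = c * pd i f p := by
  unfold pd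
  rw [fderiv_const_mul (hf p)]
  simp

lemma pd_const (c : ℝ) (i : Fin 2) (p : ℝ × ℝ) : pd i (fun _ => c) p = 0 := by
  simp [pd]

lemma pd_comm {f : ℝ × ℝ → ℝ} (hf : ContDiff ℝ (⊤ : ℕ∞) f) (i j : Fin 2) (p : ℝ × ℝ) :
    pd i (pd j f) p = pd j (pd i f) p := by
  have hdf : Differentiable ℝ (fderiv ℝ f) := (hf.fderiv_right (m := (⊤ : ℕ∞)) (by simp)).differentiable (by simp)
  have hsym := second_derivative_symmetric (f := f) (f' := fderiv ℝ f)
      (f'' := fderiv ℝ (fderiv ℝ f) p)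
      (fun y => (hf.differentiable (by simp) y).hasFDerivAt) (hdf p).hasFDerivAt
  have key : ∀ m n : Fin 2, pd m (pd n f) p = fderiv ℝ (fderiv ℝ f) p (ee m) (ee n) := by
    intro m n
    have h1 : HasFDerivAt (fun q => fderiv ℝ f q (ee n))
        ((ContinuousLinearMap.apply ℝ ℝ (ee n)).comp (fderiv ℝ (fderiv ℝ f) p)) p :=
      ((ContinuousLinearMap.apply ℝ ℝ (ee n)).hasFDerivAt).comp p (hdf p).hasFDerivAt
    show fderiv ℝ (fun q => fderiv ℝ f q (ee n)) p (ee m) = _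
    rw [h1.fderiv]
    rfl
  rw [key i j, key j i, hsym]

lemma hasDerivAt_slice0 {f : ℝ × ℝ → ℝ} (hf : Differentiable ℝ f) (y x : ℝ) :
    HasDerivAt (fun t => f (t, y)) (pd 0 f (x, y)) x := by
  have hc : HasDerivAt (fun t : ℝ => ((t, y) : ℝ × ℝ)) (((1 : ℝ), (0 : ℝ)) : ℝ × ℝ) x :=
    (hasDerivAt_id x).prodMk (hasDerivAt_const x y)
  have := (hf (x, y)).hasFDerivAt.comp_hasDerivAt x hc
  simpa [Function.comp_def, pd, ee] using this

lemma hasDerivAt_slice1 {f : ℝ × ℝ → ℝ} (hf : Differentiable ℝ f) (x y : ℝ) :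
    HasDerivAt (fun t => f (x, t)) (pd 1 f (x, y)) y := by
  have hc : HasDerivAt (fun t : ℝ => ((x, t) : ℝ × ℝ)) (((0 : ℝ), (1 : ℝ)) : ℝ × ℝ) y :=
    (hasDerivAt_const y x).prodMk (hasDerivAt_id y)
  have := (hf (x, y)).hasFDerivAt.comp_hasDerivAt y hc
  simpa [Function.comp_def, pd, ee] using this

lemma ode_exp {f : ℝ → ℝ} {c : ℝ} (hf : ∀ x, HasDerivAt f (c * f x) x) (x : ℝ) :
    f x = f 0 * Real.exp (c * x) := by
  have hg : ∀ t, HasDerivAt (fun s => f s * Real.exp (-(c * s))) 0 t := by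
    intro t
    have hlin : HasDerivAt (fun s : ℝ => -(c * s)) (-c) t := by
      simpa using ((hasDerivAt_id t).const_mul c).fun_neg
    have he : HasDerivAt (fun s : ℝ => Real.exp (-(c * s)))
        (Real.exp (-(c * t)) * (-c)) t := hlin.exp
    have := (hf t).fun_mul he
    exact this.congr_deriv (by ring)
  have hconst : ∀ a b : ℝ, (fun s => f s * Real.exp (-(c * s))) a
      = (fun s => f s * Real.exp (-(c * s))) b :=
    fun a b => is_const_of_deriv_eq_zero (fun s => (hg s).differentiableAt)
      (fun s => (hg s).deriv) a b
  have h := hconst x 0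
  simp only [mul_zero, neg_zero, Real.exp_zero, mul_one] at h
  have : f x * Real.exp (-(c * x)) * Real.exp (c * x) = f 0 * Real.exp (c * x) := by rw [h]
  rwa [mul_assoc, ← Real.exp_add, neg_add_cancel, Real.exp_zero, mul_one] at this

lemma const_of_pd_zero {f : ℝ × ℝ → ℝ} (hf : Differentiable ℝ f)
    (h0 : ∀ p, pd 0 f p = 0) (h1 : ∀ p, pd 1 f p = 0) (p q : ℝ × ℝ) : f p = f q := by
  apply is_const_of_fderiv_eq_zero hf
  intro z
  refine ContinuousLinearMap.ext fun v => ?_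
  have hv : (v : ℝ × ℝ) = v.1 • ee 0 + v.2 • ee 1 := by
    simp [ee, Prod.ext_iff]
  rw [ContinuousLinearMap.zero_apply, hv, map_add, map_smul, map_smul]
  have e0 := h0 z; have e1 := h1 z
  simp only [pd] at e0 e1
  rw [e0, e1]; simp

lemma pd_sep (φ σ : ℝ → ℝ) (hφ : Differentiable ℝ φ) (hσ : Differentiable ℝ σ) (p : ℝ × ℝ) :
    pd 0 (fun q : ℝ × ℝ => φ q.1 * σ q.2) p = deriv φ p.1 * σ p.2
    ∧ pd 1 (fun q : ℝ × ℝ => φ q.1 * σ q.2) p = φ p.1 * deriv σ p.2 := by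
  have h1 : HasFDerivAt (fun q : ℝ × ℝ => φ q.1)
      ((deriv φ p.1) • ContinuousLinearMap.fst ℝ ℝ ℝ) p :=
    (hφ p.1).hasDerivAt.comp_hasFDerivAt p hasFDerivAt_fst
  have h2 : HasFDerivAt (fun q : ℝ × ℝ => σ q.2)
      ((deriv σ p.2) • ContinuousLinearMap.snd ℝ ℝ ℝ) p :=
    (hσ p.2).hasDerivAt.comp_hasFDerivAt p hasFDerivAt_snd
  have hm := h1.fun_mul h2
  constructor
  · show fderiv ℝ _ p _ = _
    rw [hm.fderiv]
    simp [ee, ContinuousLinearMap.smul_apply]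
    ring
  · show fderiv ℝ _ p _ = _
    rw [hm.fderiv]
    simp [ee, ContinuousLinearMap.smul_apply]

lemma pd_fst_comp (φ : ℝ → ℝ) (hφ : Differentiable ℝ φ) (p : ℝ × ℝ) :
    pd 0 (fun q : ℝ × ℝ => φ q.1) p = deriv φ p.1
    ∧ pd 1 (fun q : ℝ × ℝ => φ q.1) p = 0 := by
  have h1 : HasFDerivAt (fun q : ℝ × ℝ => φ q.1)
      ((deriv φ p.1) • ContinuousLinearMap.fst ℝ ℝ ℝ) p :=
    (hφ p.1).hasDerivAt.comp_hasFDerivAt p hasFDerivAt_fst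
  constructor
  · show fderiv ℝ _ p _ = _
    rw [h1.fderiv]; simp [ee]
  · show fderiv ℝ _ p _ = _
    rw [h1.fderiv]; simp [ee]

lemma pd_snd_comp (σ : ℝ → ℝ) (hσ : Differentiable ℝ σ) (p : ℝ × ℝ) :
    pd 0 (fun q : ℝ × ℝ => σ q.2) p = 0
    ∧ pd 1 (fun q : ℝ × ℝ => σ q.2) p = deriv σ p.2 := by
  have h1 : HasFDerivAt (fun q : ℝ × ℝ => σ q.2)
      ((deriv σ p.2) • ContinuousLinearMap.snd ℝ ℝ ℝ) p :=
    (hσ p.2).hasDerivAt.comp_hasFDerivAt p hasFDerivAt_snd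
  constructor
  · show fderiv ℝ _ p _ = _
    rw [h1.fderiv]; simp [ee]
  · show fderiv ℝ _ p _ = _
    rw [h1.fderiv]; simp [ee]


lemma contDiff_deriv_top (ξ : ℝ → ℝ) (h : ContDiff ℝ (⊤ : ℕ∞) ξ) : ContDiff ℝ (⊤ : ℕ∞) (deriv ξ) := by
  have h2 := (h.fderiv_right (m := (⊤ : ℕ∞)) ((by simp))).clm_apply (contDiff_const (c := (1:ℝ)))
  have : (fun x => fderiv ℝ ξ x 1) = deriv ξ := funext fun x => fderiv_apply_one_eq_deriv
  rwa [this] at h2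

lemma forward_main (Γ : Fin 2 → Fin 2 → Fin 2 → ℝ)
    (hΓ : ∀ i j k, Γ i j k = Γ j i k)
    (h1 : Γ 0 0 1 = 0) (h2 : Γ 0 1 1 = 0)
    (hρ : Γ 0 1 0 * (Γ 1 1 1 - Γ 0 1 0) + Γ 0 0 0 * Γ 1 1 0 ≠ 0)
    (X : Fin 2 → ℝ × ℝ → ℝ) (hX : ∀ k, ContDiff ℝ (⊤ : ℕ∞) (X k)) (hK : IsKillingA Γ X) :
    (∀ p, pd 0 (X 1) p = 0) ∧ (∀ p, pd 1 (X 1) p = 0) ∧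
    (∀ p, pd 0 (pd 0 (X 0)) p = -Γ 0 0 0 * pd 0 (X 0) p) ∧
    (∀ p, pd 0 (pd 1 (X 0)) p = -Γ 0 0 0 * pd 1 (X 0) p) ∧
    (∀ p, pd 1 (pd 0 (X 0)) p = -Γ 0 0 0 * pd 1 (X 0) p) ∧
    (∀ p, pd 1 (pd 1 (X 0)) p
      = -(2 * Γ 0 1 0 - Γ 1 1 1) * pd 1 (X 0) p + Γ 1 1 0 * pd 0 (X 0) p) := by
  have hu : ContDiff ℝ (⊤ : ℕ∞) (X 0) := hX 0
  have hv : ContDiff ℝ (⊤ : ℕ∞) (X 1) := hX 1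
  have hs : ∀ k, Γ 1 0 k = Γ 0 1 k := fun k => hΓ 1 0 k
  have E1 : ∀ p, pd 0 (pd 0 (X 1)) p = Γ 0 0 0 * pd 0 (X 1) p := by
    intro p; have h := hK 0 0 1 p
    simp only [Fin.sum_univ_two, hs, h1, h2] at h; ring_nf at h ⊢; linarith
  have E2 : ∀ p, pd 0 (pd 1 (X 1)) p
      = (Γ 0 1 0 - Γ 1 1 1) * pd 0 (X 1) p := by
    intro p; have h := hK 0 1 1 p
    simp only [Fin.sum_univ_two, hs, h1, h2] at h; ring_nf at h ⊢; linarith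
  have E3 : ∀ p, pd 1 (pd 1 (X 1)) p
      = Γ 1 1 0 * pd 0 (X 1) p - Γ 1 1 1 * pd 1 (X 1) p := by
    intro p; have h := hK 1 1 1 p
    simp only [Fin.sum_univ_two, hs, h1, h2] at h; ring_nf at h ⊢; linarith
  have F1 : ∀ p, pd 0 (pd 0 (X 0)) p
      = -Γ 0 0 0 * pd 0 (X 0) p - 2 * Γ 0 1 0 * pd 0 (X 1) p := by
    intro p; have h := hK 0 0 0 p
    simp only [Fin.sum_univ_two, hs, h1, h2] at h; ring_nf at h ⊢; linarith
  have F2 : ∀ p, pd 0 (pd 1 (X 0)) p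
      = -Γ 0 0 0 * pd 1 (X 0) p - Γ 1 1 0 * pd 0 (X 1) p - Γ 0 1 0 * pd 1 (X 1) p := by
    intro p; have h := hK 0 1 0 p
    simp only [Fin.sum_univ_two, hs, h1, h2] at h; ring_nf at h ⊢; linarith
  have F3 : ∀ p, pd 1 (pd 1 (X 0)) p
      = -(2 * Γ 0 1 0 - Γ 1 1 1) * pd 1 (X 0) p - 2 * Γ 1 1 0 * pd 1 (X 1) p
        + Γ 1 1 0 * pd 0 (X 0) p := by
    intro p; have h := hK 1 1 0 p
    simp only [Fin.sum_univ_two, hs, h1, h2] at h; ring_nf at h ⊢; linarith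
  -- Step A : pd 0 (X 1) = 0
  have hW1 : ∀ p, pd 1 (pd 0 (X 1)) p = (Γ 0 1 0 - Γ 1 1 1) * pd 0 (X 1) p := by
    intro p; rw [pd_comm hv 1 0 p]; exact E2 p
  have hWzero : ∀ p, pd 0 (X 1) p = 0 := by
    intro p
    have hfun1 : pd 0 (pd 1 (X 1)) = fun q => (Γ 0 1 0 - Γ 1 1 1) * pd 0 (X 1) q :=
      funext fun q => E2 q
    have hfun2 : pd 1 (pd 1 (X 1)) = fun q => Γ 1 1 0 * pd 0 (X 1) q
        + -Γ 1 1 1 * pd 1 (X 1) q := funext fun q => by rw [E3 q]; ring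
    have lhs : pd 1 (pd 0 (pd 1 (X 1))) p
        = (Γ 0 1 0 - Γ 1 1 1) * ((Γ 0 1 0 - Γ 1 1 1) * pd 0 (X 1) p) := by
      rw [hfun1, pd_const_mul (diff_pd hv 0), hW1 p]
    have rhs : pd 0 (pd 1 (pd 1 (X 1))) p
        = Γ 1 1 0 * (Γ 0 0 0 * pd 0 (X 1) p)
          + -Γ 1 1 1 * ((Γ 0 1 0 - Γ 1 1 1) * pd 0 (X 1) p) := by
      rw [hfun2, pd_add ((diff_pd hv 0).const_mul _) ((diff_pd hv 1).const_mul _),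
        pd_const_mul (diff_pd hv 0), pd_const_mul (diff_pd hv 1), E1 p, E2 p]
    have hcomm : pd 1 (pd 0 (pd 1 (X 1))) p = pd 0 (pd 1 (pd 1 (X 1))) p :=
      pd_comm (contDiff_pd hv 1) 1 0 p
    have hkey : (Γ 0 1 0 * (Γ 1 1 1 - Γ 0 1 0) + Γ 0 0 0 * Γ 1 1 0) * pd 0 (X 1) p = 0 := by
      rw [lhs, rhs] at hcomm; ring_nf at hcomm ⊢; linarith
    exact (mul_eq_zero.mp hkey).resolve_left hρ
  -- Step B : pd 1 (X 1) = 0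
  have hZ0 : ∀ p, pd 0 (pd 1 (X 1)) p = 0 := by
    intro p; rw [E2 p, hWzero p]; ring
  have hZ1 : ∀ p, pd 1 (pd 1 (X 1)) p = -Γ 1 1 1 * pd 1 (X 1) p := by
    intro p; rw [E3 p, hWzero p]; ring
  have hQ0 : ∀ p, pd 0 (pd 1 (X 0)) p
      = -Γ 0 0 0 * pd 1 (X 0) p + -Γ 0 1 0 * pd 1 (X 1) p := by
    intro p; rw [F2 p, hWzero p]; ring
  have hQ1 : ∀ p, pd 1 (pd 1 (X 0)) p
      = -(2 * Γ 0 1 0 - Γ 1 1 1) * pd 1 (X 0) p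
        + (-(2 * Γ 1 1 0) * pd 1 (X 1) p + Γ 1 1 0 * pd 0 (X 0) p) := by
    intro p; rw [F3 p]; ring
  have hP0 : ∀ p, pd 0 (pd 0 (X 0)) p = -Γ 0 0 0 * pd 0 (X 0) p := by
    intro p; rw [F1 p, hWzero p]; ring
  have hZzero : ∀ p, pd 1 (X 1) p = 0 := by
    intro p
    have hfun1 : pd 0 (pd 1 (X 0)) = fun q => -Γ 0 0 0 * pd 1 (X 0) q
        + -Γ 0 1 0 * pd 1 (X 1) q := funext fun q => hQ0 q
    have hfun2 : pd 1 (pd 1 (X 0)) = fun q => -(2 * Γ 0 1 0 - Γ 1 1 1) * pd 1 (X 0) q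
        + (-(2 * Γ 1 1 0) * pd 1 (X 1) q + Γ 1 1 0 * pd 0 (X 0) q) :=
      funext fun q => hQ1 q
    have lhs : pd 1 (pd 0 (pd 1 (X 0))) p
        = -Γ 0 0 0 * (-(2 * Γ 0 1 0 - Γ 1 1 1) * pd 1 (X 0) p
            + (-(2 * Γ 1 1 0) * pd 1 (X 1) p + Γ 1 1 0 * pd 0 (X 0) p))
          + -Γ 0 1 0 * (-Γ 1 1 1 * pd 1 (X 1) p) := by
      rw [hfun1, pd_add ((diff_pd hu 1).const_mul _) ((diff_pd hv 1).const_mul _),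
        pd_const_mul (diff_pd hu 1), pd_const_mul (diff_pd hv 1), hQ1 p, hZ1 p]
    have rhs : pd 0 (pd 1 (pd 1 (X 0))) p
        = -(2 * Γ 0 1 0 - Γ 1 1 1) * (-Γ 0 0 0 * pd 1 (X 0) p + -Γ 0 1 0 * pd 1 (X 1) p)
          + (-(2 * Γ 1 1 0) * 0 + Γ 1 1 0 * (-Γ 0 0 0 * pd 0 (X 0) p)) := by
      rw [hfun2,
        pd_add ((diff_pd hu 1).const_mul _)
          (((diff_pd hv 1).const_mul _).fun_add ((diff_pd hu 0).const_mul _)),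
        pd_const_mul (diff_pd hu 1),
        pd_add ((diff_pd hv 1).const_mul _) ((diff_pd hu 0).const_mul _),
        pd_const_mul (diff_pd hv 1), pd_const_mul (diff_pd hu 0),
        hQ0 p, hZ0 p, hP0 p]
    have hcomm : pd 1 (pd 0 (pd 1 (X 0))) p = pd 0 (pd 1 (pd 1 (X 0))) p :=
      pd_comm (contDiff_pd hu 1) 1 0 p
    have hkey : 2 * ((Γ 0 1 0 * (Γ 1 1 1 - Γ 0 1 0) + Γ 0 0 0 * Γ 1 1 0) * pd 1 (X 1) p)
        = 0 := by
      rw [lhs, rhs] at hcomm; ring_nf at hcomm ⊢; linarith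
    have := mul_eq_zero.mp hkey
    rcases this with h | h
    · norm_num at h
    · exact (mul_eq_zero.mp h).resolve_left hρ
  refine ⟨hWzero, hZzero, hP0, ?_, ?_, ?_⟩
  · intro p; rw [hQ0 p, hZzero p]; ring
  · intro p; rw [pd_comm hu 1 0 p, hQ0 p, hZzero p]; ring
  · intro p; rw [hQ1 p, hZzero p]; ring

lemma caseA_forward {A B C D : ℝ} (hA : A ≠ 0) {u v : ℝ × ℝ → ℝ}
    (hu : ContDiff ℝ (⊤ : ℕ∞) u) (hv : ContDiff ℝ (⊤ : ℕ∞) v)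
    (hv0 : ∀ p, pd 0 v p = 0) (hv1 : ∀ p, pd 1 v p = 0)
    (hP0 : ∀ p, pd 0 (pd 0 u) p = -A * pd 0 u p)
    (hQ0 : ∀ p, pd 0 (pd 1 u) p = -A * pd 1 u p)
    (hP1 : ∀ p, pd 1 (pd 0 u) p = -A * pd 1 u p)
    (hQ1 : ∀ p, pd 1 (pd 1 u) p = -(2 * B - D) * pd 1 u p + C * pd 0 u p) :
    ∃ (ξ : ℝ → ℝ) (a b : ℝ), ContDiff ℝ (⊤ : ℕ∞) ξ ∧
      (∀ t : ℝ, deriv (deriv ξ) t + (2 * B - D) * deriv ξ t + A * C * ξ t = 0) ∧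
      (∀ p : ℝ × ℝ, u p = Real.exp (-A * p.1) * ξ p.2 + a ∧ v p = b) := by
  have hud : Differentiable ℝ u := hu.differentiable (by simp)
  set g : ℝ → ℝ := fun y => pd 0 u (0, y) with hgdef
  have hgC : ContDiff ℝ (⊤ : ℕ∞) g :=
    (contDiff_pd hu 0).comp (contDiff_const.prodMk contDiff_id)
  have hgd : Differentiable ℝ g := hgC.differentiable (by simp)
  set ξ : ℝ → ℝ := fun y => (-1 / A) * g y with hξdef
  have hξC : ContDiff ℝ (⊤ : ℕ∞) ξ := contDiff_const.mul hgC
  have hξd : Differentiable ℝ ξ := hξC.differentiable (by simp)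
  have hE : ∀ x : ℝ, HasDerivAt (fun s => Real.exp (-A * s)) (-A * Real.exp (-A * x)) x := by
    intro x
    simpa [mul_comm] using (((hasDerivAt_id x).const_mul (-A)).exp)
  set E : ℝ → ℝ := fun x => Real.exp (-A * x) with hEdef
  have hEd : Differentiable ℝ E := fun x => (hE x).differentiableAt
  have hEderiv : ∀ x, deriv E x = -A * E x := fun x => (hE x).deriv
  -- P p = E p.1 * g p.2
  have hP : ∀ p : ℝ × ℝ, pd 0 u p = E p.1 * g p.2 := by
    intro p
    have hf : ∀ t : ℝ, HasDerivAt (fun s => pd 0 u (s, p.2)) (-A * pd 0 u (t, p.2)) t := by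
      intro t
      have := hasDerivAt_slice0 (diff_pd hu 0) p.2 t
      rwa [hP0 (t, p.2)] at this
    have h0 := ode_exp hf p.1
    rw [hEdef, hgdef]
    simpa [mul_comm] using h0
  have hPfun : pd 0 u = fun q : ℝ × ℝ => E q.1 * g q.2 := funext hP
  -- Q p = E p.1 * deriv ξ p.2
  have hderξ : ∀ y, deriv ξ y = (-1 / A) * deriv g y := by
    intro y; rw [hξdef]; exact deriv_const_mul _ (hgd y)
  have hQ : ∀ p : ℝ × ℝ, pd 1 u p = E p.1 * deriv ξ p.2 := by
    intro p
    have h1 : pd 1 (pd 0 u) p = E p.1 * deriv g p.2 := by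
      rw [hPfun]; exact (pd_sep E g hEd hgd p).2
    have h2 := hP1 p
    rw [h1] at h2
    have key : -A * pd 1 u p = -A * (E p.1 * deriv ξ p.2) := by
      rw [← h2, hderξ p.2]
      field_simp
    exact mul_left_cancel₀ (neg_ne_zero.mpr hA) key
  -- u p = E p.1 * ξ p.2 + a
  have hξdval : ∀ y, -A * ξ y = g y := by
    intro y; rw [hξdef]; field_simp
  have hdiffsep : Differentiable ℝ (fun q : ℝ × ℝ => E q.1 * ξ q.2) :=
    (hEd.comp differentiable_fst).mul (hξd.comp differentiable_snd)
  have hh0 : ∀ p : ℝ × ℝ, pd 0 (fun q => u q + -1 * (E q.1 * ξ q.2)) p = 0 := by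
    intro p
    rw [pd_add hud (hdiffsep.const_mul _), pd_const_mul hdiffsep, (pd_sep E ξ hEd hξd p).1,
      hP p, (hE p.1).deriv]
    have hEp : Real.exp (-A * p.1) = E p.1 := rfl
    rw [hEp]
    linear_combination (-E p.1) * hξdval p.2
  have hh1 : ∀ p : ℝ × ℝ, pd 1 (fun q => u q + -1 * (E q.1 * ξ q.2)) p = 0 := by
    intro p
    rw [pd_add hud (hdiffsep.const_mul _), pd_const_mul hdiffsep, (pd_sep E ξ hEd hξd p).2,
      hQ p]
    ring
  have hconst := const_of_pd_zero (hud.fun_add (hdiffsep.const_mul _)) hh0 hh1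
  refine ⟨ξ, u (0, 0) + -1 * (E 0 * ξ 0), v (0, 0), hξC, ?_, ?_⟩
  · -- ODE
    intro t
    have hQfun : pd 1 u = fun q : ℝ × ℝ => E q.1 * deriv ξ q.2 := funext hQ
    have hdξd : Differentiable ℝ (deriv ξ) := (contDiff_deriv_top ξ hξC).differentiable (by simp)
    have h11 : pd 1 (pd 1 u) (0, t) = E 0 * deriv (deriv ξ) t := by
      rw [hQfun]; exact (pd_sep E (deriv ξ) hEd hdξd (0, t)).2
    have h2 := hQ1 (0, t)
    rw [h11, hQ (0, t), hP (0, t)] at h2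
    have hE0 : E 0 = 1 := by simp [hEdef]
    rw [hE0] at h2
    have hg0 : g t = -A * ξ t := (hξdval t).symm
    rw [hg0] at h2
    ring_nf at h2 ⊢
    linarith
  · intro p
    constructor
    · have := hconst p (0, 0)
      have hEp : Real.exp (-A * p.1) = E p.1 := rfl
      rw [hEp]
      linarith [this]
    · exact const_of_pd_zero (hv.differentiable (by simp)) hv0 hv1 p (0, 0)

lemma case0_forward {B C D : ℝ} {u v : ℝ × ℝ → ℝ}
    (hu : ContDiff ℝ (⊤ : ℕ∞) u) (hv : ContDiff ℝ (⊤ : ℕ∞) v)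
    (hv0 : ∀ p, pd 0 v p = 0) (hv1 : ∀ p, pd 1 v p = 0)
    (hP0 : ∀ p, pd 0 (pd 0 u) p = 0)
    (hQ0 : ∀ p, pd 0 (pd 1 u) p = 0)
    (hP1 : ∀ p, pd 1 (pd 0 u) p = 0)
    (hQ1 : ∀ p, pd 1 (pd 1 u) p = -(2 * B - D) * pd 1 u p + C * pd 0 u p) :
    ∃ (ξ : ℝ → ℝ) (c₁ a b : ℝ), ContDiff ℝ (⊤ : ℕ∞) ξ ∧
      (∀ t : ℝ, deriv (deriv ξ) t + (2 * B - D) * deriv ξ t - c₁ * C = 0) ∧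
      (∀ p : ℝ × ℝ, u p = ξ p.2 + c₁ * p.1 + a ∧ v p = b) := by
  have hud : Differentiable ℝ u := hu.differentiable (by simp)
  set c₁ : ℝ := pd 0 u (0, 0) with hc₁
  have hPconst : ∀ p : ℝ × ℝ, pd 0 u p = c₁ :=
    fun p => const_of_pd_zero (diff_pd hu 0) hP0 hP1 p (0, 0)
  set ξ : ℝ → ℝ := fun y => u (0, y) with hξdef
  have hξC : ContDiff ℝ (⊤ : ℕ∞) ξ := hu.comp (contDiff_const.prodMk contDiff_id)
  have hξd : Differentiable ℝ ξ := hξC.differentiable (by simp)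
  have hderξ : ∀ y, deriv ξ y = pd 1 u (0, y) :=
    fun y => (hasDerivAt_slice1 hud 0 y).deriv
  -- pd 1 u is independent of x
  have hQx : ∀ p : ℝ × ℝ, pd 1 u p = pd 1 u (0, p.2) := by
    intro p
    have hf : ∀ t : ℝ, HasDerivAt (fun s => pd 1 u (s, p.2)) 0 t := by
      intro t
      have := hasDerivAt_slice0 (diff_pd hu 1) p.2 t
      rwa [hQ0 (t, p.2)] at this
    have hcon : (fun s => pd 1 u (s, p.2)) p.1 = (fun s => pd 1 u (s, p.2)) 0 :=
      is_const_of_deriv_eq_zero (fun s => (hf s).differentiableAt)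
        (fun s => (hf s).deriv) p.1 0
    simpa using hcon
  -- u p - (ξ p.2 + c₁ * p.1) is constant
  have hdiffsep : Differentiable ℝ (fun q : ℝ × ℝ => ξ q.2 + c₁ * q.1) :=
    (hξd.comp differentiable_snd).add (differentiable_fst.const_mul c₁)
  have hpdsep : ∀ (i : Fin 2) (p : ℝ × ℝ), pd i (fun q : ℝ × ℝ => ξ q.2 + c₁ * q.1) p
      = pd i (fun q : ℝ × ℝ => ξ q.2) p + pd i (fun q : ℝ × ℝ => c₁ * q.1) p := by
    intro i p
    exact pd_add (hξd.comp differentiable_snd) (differentiable_fst.const_mul c₁) i p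
  have hfst : ∀ (i : Fin 2) (p : ℝ × ℝ), pd i (fun q : ℝ × ℝ => c₁ * q.1) p
      = pd i (fun q : ℝ × ℝ => (fun x => c₁ * x) q.1) p := fun i p => rfl
  have hh0 : ∀ p : ℝ × ℝ, pd 0 (fun q => u q + -1 * (ξ q.2 + c₁ * q.1)) p = 0 := by
    intro p
    rw [pd_add hud (hdiffsep.const_mul _), pd_const_mul hdiffsep, hpdsep 0 p,
      (pd_snd_comp ξ hξd p).1, hfst 0 p,
      (pd_fst_comp (fun x => c₁ * x) (differentiable_id.const_mul c₁) p).1, hPconst p]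
    have : deriv (fun x => c₁ * x) p.1 = c₁ := by
      simpa using deriv_const_mul (x := p.1) c₁ differentiable_id.differentiableAt
    rw [this]; ring
  have hh1 : ∀ p : ℝ × ℝ, pd 1 (fun q => u q + -1 * (ξ q.2 + c₁ * q.1)) p = 0 := by
    intro p
    rw [pd_add hud (hdiffsep.const_mul _), pd_const_mul hdiffsep, hpdsep 1 p,
      (pd_snd_comp ξ hξd p).2, hfst 1 p,
      (pd_fst_comp (fun x => c₁ * x) (differentiable_id.const_mul c₁) p).2,
      hderξ p.2, ← hQx p]
    ring
  have hconst := const_of_pd_zero (hud.fun_add (hdiffsep.const_mul _)) hh0 hh1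
  refine ⟨ξ, c₁, u (0, 0) + -1 * (ξ 0 + c₁ * 0), v (0, 0), hξC, ?_, ?_⟩
  · intro t
    have hQfun : pd 1 u = fun q : ℝ × ℝ => (fun y => pd 1 u (0, y)) q.2 :=
      funext fun q => hQx q
    have hdd : deriv (deriv ξ) t = pd 1 (pd 1 u) (0, t) := by
      have h1 : deriv ξ = fun y => pd 1 u (0, y) := funext hderξ
      rw [h1]
      exact (hasDerivAt_slice1 (diff_pd hu 1) 0 t).deriv
    rw [hdd, hQ1 (0, t), hPconst (0, t), ← hderξ t]
    ring
  · intro p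
    constructor
    · have := hconst p (0, 0)
      norm_num at this ⊢
      linarith [this]
    · exact const_of_pd_zero (hv.differentiable (by simp)) hv0 hv1 p (0, 0)

lemma caseA_backward (Γ : Fin 2 → Fin 2 → Fin 2 → ℝ)
    (hΓ : ∀ i j k, Γ i j k = Γ j i k)
    (h1 : Γ 0 0 1 = 0) (h2 : Γ 0 1 1 = 0)
    (X : Fin 2 → ℝ × ℝ → ℝ) (ξ : ℝ → ℝ) (a b : ℝ) (hξ : ContDiff ℝ (⊤ : ℕ∞) ξ)
    (hode : ∀ t : ℝ, deriv (deriv ξ) t + (2 * Γ 0 1 0 - Γ 1 1 1) * deriv ξ t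
      + Γ 0 0 0 * Γ 1 1 0 * ξ t = 0)
    (hform : ∀ p : ℝ × ℝ, X 0 p = Real.exp (-Γ 0 0 0 * p.1) * ξ p.2 + a ∧ X 1 p = b) :
    IsKillingA Γ X := by
  have hs : ∀ k, Γ 1 0 k = Γ 0 1 k := fun k => hΓ 1 0 k
  set A : ℝ := Γ 0 0 0 with hAdef
  set E : ℝ → ℝ := fun x => Real.exp (-A * x) with hEdef
  have hE : ∀ x : ℝ, HasDerivAt E (-A * E x) x := by
    intro x
    have h0 : HasDerivAt (fun s : ℝ => -A * s) (-A) x := by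
      simpa using (hasDerivAt_id x).const_mul (-A)
    have h1' := h0.exp
    simp only [hEdef]
    convert h1' using 1
    ring
  have hEd : Differentiable ℝ E := fun x => (hE x).differentiableAt
  have hE' : ∀ x : ℝ, HasDerivAt (fun s => -A * E s) (-A * (-A * E x)) x :=
    fun x => (hE x).const_mul (-A)
  have hE'd : Differentiable ℝ (fun s => -A * E s) := fun x => (hE' x).differentiableAt
  have hξd : Differentiable ℝ ξ := hξ.differentiable (by simp)
  have hdξd : Differentiable ℝ (deriv ξ) := (contDiff_deriv_top ξ hξ).differentiable (by simp)
  have hX1 : X 1 = fun _ => b := funext fun p => (hform p).2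
  have hz : ∀ (i : Fin 2) (p : ℝ × ℝ), pd i (X 1) p = 0 := by
    intro i p; rw [hX1]; exact pd_const b i p
  have hzfun : ∀ j : Fin 2, pd j (X 1) = fun _ => (0 : ℝ) := fun j => funext fun p => hz j p
  have hzz : ∀ (i j : Fin 2) (p : ℝ × ℝ), pd i (pd j (X 1)) p = 0 := by
    intro i j p; rw [hzfun j]; exact pd_const 0 i p
  have hX0 : X 0 = fun q : ℝ × ℝ => E q.1 * ξ q.2 + a := funext fun p => (hform p).1
  have hsep : Differentiable ℝ (fun q : ℝ × ℝ => E q.1 * ξ q.2) :=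
    (hEd.comp differentiable_fst).mul (hξd.comp differentiable_snd)
  have hp0 : ∀ p : ℝ × ℝ, pd 0 (X 0) p = -A * E p.1 * ξ p.2 := by
    intro p
    rw [hX0, pd_add hsep (differentiable_const a), pd_const, (pd_sep E ξ hEd hξd p).1,
      (hE p.1).deriv]
    ring
  have hp1 : ∀ p : ℝ × ℝ, pd 1 (X 0) p = E p.1 * deriv ξ p.2 := by
    intro p
    rw [hX0, pd_add hsep (differentiable_const a), pd_const, (pd_sep E ξ hEd hξd p).2]
    ring
  have hp0fun : pd 0 (X 0) = fun q : ℝ × ℝ => (fun s => -A * E s) q.1 * ξ q.2 :=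
    funext fun p => hp0 p
  have hp1fun : pd 1 (X 0) = fun q : ℝ × ℝ => E q.1 * deriv ξ q.2 :=
    funext fun p => hp1 p
  have hp00 : ∀ p : ℝ × ℝ, pd 0 (pd 0 (X 0)) p = A * A * E p.1 * ξ p.2 := by
    intro p
    rw [hp0fun, (pd_sep _ ξ hE'd hξd p).1, (hE' p.1).deriv]
    ring
  have hp10 : ∀ p : ℝ × ℝ, pd 1 (pd 0 (X 0)) p = -A * E p.1 * deriv ξ p.2 := by
    intro p
    rw [hp0fun, (pd_sep _ ξ hE'd hξd p).2]
  have hp01 : ∀ p : ℝ × ℝ, pd 0 (pd 1 (X 0)) p = -A * E p.1 * deriv ξ p.2 := by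
    intro p
    rw [hp1fun, (pd_sep E (deriv ξ) hEd hdξd p).1, (hE p.1).deriv]
  have hp11 : ∀ p : ℝ × ℝ, pd 1 (pd 1 (X 0)) p = E p.1 * deriv (deriv ξ) p.2 := by
    intro p
    rw [hp1fun, (pd_sep E (deriv ξ) hEd hdξd p).2]
  intro i j k p
  fin_cases i <;> fin_cases j <;> fin_cases k <;>
    simp only [Fin.sum_univ_two, Fin.isValue, Fin.mk_zero, Fin.mk_one, h1, h2, hs,
      hp00, hp01, hp10, hp11, hp0, hp1, hz, hzz] <;>
    first
      | ring1
      | linear_combination (E p.1) * hode p.2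

lemma case0_backward (Γ : Fin 2 → Fin 2 → Fin 2 → ℝ)
    (hΓ : ∀ i j k, Γ i j k = Γ j i k)
    (h1 : Γ 0 0 1 = 0) (h2 : Γ 0 1 1 = 0) (hA : Γ 0 0 0 = 0)
    (X : Fin 2 → ℝ × ℝ → ℝ) (ξ : ℝ → ℝ) (c₁ a b : ℝ) (hξ : ContDiff ℝ (⊤ : ℕ∞) ξ)
    (hode : ∀ t : ℝ, deriv (deriv ξ) t + (2 * Γ 0 1 0 - Γ 1 1 1) * deriv ξ t
      - c₁ * Γ 1 1 0 = 0)
    (hform : ∀ p : ℝ × ℝ, X 0 p = ξ p.2 + c₁ * p.1 + a ∧ X 1 p = b) :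
    IsKillingA Γ X := by
  have hs : ∀ k, Γ 1 0 k = Γ 0 1 k := fun k => hΓ 1 0 k
  have hξd : Differentiable ℝ ξ := hξ.differentiable (by simp)
  have hdξd : Differentiable ℝ (deriv ξ) := (contDiff_deriv_top ξ hξ).differentiable (by simp)
  have hX1 : X 1 = fun _ => b := funext fun p => (hform p).2
  have hz : ∀ (i : Fin 2) (p : ℝ × ℝ), pd i (X 1) p = 0 := by
    intro i p; rw [hX1]; exact pd_const b i p
  have hzfun : ∀ j : Fin 2, pd j (X 1) = fun _ => (0 : ℝ) := fun j => funext fun p => hz j p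
  have hzz : ∀ (i j : Fin 2) (p : ℝ × ℝ), pd i (pd j (X 1)) p = 0 := by
    intro i j p; rw [hzfun j]; exact pd_const 0 i p
  have hX0 : X 0 = fun q : ℝ × ℝ => (ξ q.2 + c₁ * q.1) + a :=
    funext fun p => by rw [(hform p).1]
  have hlin : Differentiable ℝ (fun q : ℝ × ℝ => c₁ * q.1) :=
    differentiable_fst.const_mul c₁
  have hsum : Differentiable ℝ (fun q : ℝ × ℝ => ξ q.2 + c₁ * q.1) :=
    (hξd.comp differentiable_snd).add hlin
  have hfst : ∀ (i : Fin 2) (p : ℝ × ℝ), pd i (fun q : ℝ × ℝ => c₁ * q.1) p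
      = pd i (fun q : ℝ × ℝ => (fun x => c₁ * x) q.1) p := fun i p => rfl
  have hderc : ∀ x : ℝ, deriv (fun s : ℝ => c₁ * s) x = c₁ := by
    intro x
    simpa using deriv_const_mul (x := x) c₁ differentiable_id.differentiableAt
  have hp0 : ∀ p : ℝ × ℝ, pd 0 (X 0) p = c₁ := by
    intro p
    rw [hX0, pd_add hsum (differentiable_const a), pd_const,
      pd_add (f := fun q : ℝ × ℝ => ξ q.2) (g := fun q : ℝ × ℝ => c₁ * q.1) (hξd.comp differentiable_snd) hlin,
      (pd_snd_comp ξ hξd p).1, hfst 0 p,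
      (pd_fst_comp (fun x => c₁ * x) (differentiable_id.const_mul c₁) p).1, hderc p.1]
    ring
  have hp1 : ∀ p : ℝ × ℝ, pd 1 (X 0) p = deriv ξ p.2 := by
    intro p
    rw [hX0, pd_add hsum (differentiable_const a), pd_const,
      pd_add (f := fun q : ℝ × ℝ => ξ q.2) (g := fun q : ℝ × ℝ => c₁ * q.1) (hξd.comp differentiable_snd) hlin,
      (pd_snd_comp ξ hξd p).2, hfst 1 p,
      (pd_fst_comp (fun x => c₁ * x) (differentiable_id.const_mul c₁) p).2]
    ring
  have hp0fun : pd 0 (X 0) = fun _ : ℝ × ℝ => c₁ := funext fun p => hp0 p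
  have hp1fun : pd 1 (X 0) = fun q : ℝ × ℝ => deriv ξ q.2 := funext fun p => hp1 p
  have hp00 : ∀ p : ℝ × ℝ, pd 0 (pd 0 (X 0)) p = 0 := by
    intro p; rw [hp0fun]; exact pd_const c₁ 0 p
  have hp10 : ∀ p : ℝ × ℝ, pd 1 (pd 0 (X 0)) p = 0 := by
    intro p; rw [hp0fun]; exact pd_const c₁ 1 p
  have hp01 : ∀ p : ℝ × ℝ, pd 0 (pd 1 (X 0)) p = 0 := by
    intro p; rw [hp1fun]; exact (pd_snd_comp (deriv ξ) hdξd p).1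
  have hp11 : ∀ p : ℝ × ℝ, pd 1 (pd 1 (X 0)) p = deriv (deriv ξ) p.2 := by
    intro p; rw [hp1fun]; exact (pd_snd_comp (deriv ξ) hdξd p).2
  intro i j k p
  fin_cases i <;> fin_cases j <;> fin_cases k <;>
    simp only [Fin.sum_univ_two, Fin.isValue, Fin.mk_zero, Fin.mk_one, h1, h2, hA, hs,
      hp00, hp01, hp10, hp11, hp0, hp1, hz, hzz] <;>
    first
      | ring1
      | linear_combination hode p.2

/-- complete description of the affine Killing fields of a Type A connection
normalized so that `Γ₁₁² = Γ₁₂² = 0` and `ρ₂₂ ≠ 0`. -/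
theorem stmt6 (Γ : Fin 2 → Fin 2 → Fin 2 → ℝ)
    (hΓ : ∀ i j k, Γ i j k = Γ j i k)
    (h1 : Γ 0 0 1 = 0) (h2 : Γ 0 1 1 = 0)
    (hρ : Γ 0 1 0 * (Γ 1 1 1 - Γ 0 1 0) + Γ 0 0 0 * Γ 1 1 0 ≠ 0)
    (X : Fin 2 → ℝ × ℝ → ℝ) (hX : ∀ k, ContDiff ℝ (⊤ : ℕ∞) (X k)) :
    (Γ 0 0 0 ≠ 0 →
      (IsKillingA Γ X ↔
        ∃ (ξ : ℝ → ℝ) (a b : ℝ), ContDiff ℝ (⊤ : ℕ∞) ξ ∧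
          (∀ t : ℝ, deriv (deriv ξ) t + (2 * Γ 0 1 0 - Γ 1 1 1) * deriv ξ t
            + Γ 0 0 0 * Γ 1 1 0 * ξ t = 0) ∧
          (∀ p : ℝ × ℝ,
            X 0 p = Real.exp (-Γ 0 0 0 * p.1) * ξ p.2 + a ∧ X 1 p = b))) ∧
    (Γ 0 0 0 = 0 →
      (IsKillingA Γ X ↔
        ∃ (ξ : ℝ → ℝ) (c₁ a b : ℝ), ContDiff ℝ (⊤ : ℕ∞) ξ ∧
          (∀ t : ℝ, deriv (deriv ξ) t + (2 * Γ 0 1 0 - Γ 1 1 1) * deriv ξ t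
            - c₁ * Γ 1 1 0 = 0) ∧
          (∀ p : ℝ × ℝ,
            X 0 p = ξ p.2 + c₁ * p.1 + a ∧ X 1 p = b))) := by
  have hu : ContDiff ℝ (⊤ : ℕ∞) (X 0) := hX 0
  have hv : ContDiff ℝ (⊤ : ℕ∞) (X 1) := hX 1
  constructor
  · intro hA
    constructor
    · intro hK
      obtain ⟨hW, hZ, e00, e01, e10, e11⟩ := forward_main Γ hΓ h1 h2 hρ X hX hK
      exact caseA_forward (A := Γ 0 0 0) (B := Γ 0 1 0) (C := Γ 1 1 0) (D := Γ 1 1 1)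
        hA hu hv hW hZ e00 e01 e10 e11
    · rintro ⟨ξ, a, b, hξ, hode, hform⟩
      exact caseA_backward Γ hΓ h1 h2 X ξ a b hξ hode hform
  · intro hA
    constructor
    · intro hK
      obtain ⟨hW, hZ, e00, e01, e10, e11⟩ := forward_main Γ hΓ h1 h2 hρ X hX hK
      have e00' : ∀ p, pd 0 (pd 0 (X 0)) p = 0 := fun p => by rw [e00 p, hA]; ring
      have e01' : ∀ p, pd 0 (pd 1 (X 0)) p = 0 := fun p => by rw [e01 p, hA]; ring
      have e10' : ∀ p, pd 1 (pd 0 (X 0)) p = 0 := fun p => by rw [e10 p, hA]; ring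
      exact case0_forward (B := Γ 0 1 0) (C := Γ 1 1 0) (D := Γ 1 1 1)
        hu hv hW hZ e00' e01' e10' e11
    · rintro ⟨ξ, c₁, a, b, hξ, hode, hform⟩
      exact case0_backward Γ hΓ h1 h2 hA X ξ c₁ a b hξ hode hform
end
end

section
/- Let ∇ be a Type B connection on M = (0,∞)×ℝ with Christoffel symbols Γ_{ij}^k = C_{ij}^k/x¹, and for σ ∈ {−1,0,1} let X(σ) = 2x¹x²∂₁ + ((x²)² + σ(x¹)²)∂₂. Then: (a) X(0) is an affine Killing field for ∇ if and only if C₁₁² = 0, C₁₁¹ = −3/2, C₁₂² = −1/2 and C₂₂² = 2C₁₂¹ (with C₁₂¹ and C₂₂¹ arbitrary); (b) X(1) is an affine Killing field for ∇ if and only if C₁₁¹ = −1, C₁₁² = 0, C₁₂¹ = 0, C₁₂² = −1, C₂₂¹ = −1, C₂₂² = 0; (c) X(−1) is an affine Killing field for ∇ if and only if C₁₁¹ = −1, C₁₁² = 0, C₁₂¹ = 0, C₁₂² = −1, C₂₂¹ = 1, C₂₂² = 0. -/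
noncomputable section

/-- Christoffel symbols `Γ_{ij}^k = C_{ij}^k / x¹` of a Type B connection on `(0,∞)×ℝ`. -/
def GammaB (C : Fin 2 → Fin 2 → Fin 2 → ℝ) (i j k : Fin 2) : ℝ × ℝ → ℝ :=
  fun p => C i j k / p.1

/-- Affine Killing vector field for a Type B connection on `M = (0,∞) × ℝ`. -/
def IsKillingB (C : Fin 2 → Fin 2 → Fin 2 → ℝ) (X : Fin 2 → ℝ × ℝ → ℝ) : Prop :=
  ∀ i j k : Fin 2, ∀ p : ℝ × ℝ, 0 < p.1 →
    pd i (pd j (X k)) p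
      + ∑ l, (X l p * pd l (GammaB C i j k) p + GammaB C l j k p * pd i (X l) p
          + GammaB C i l k p * pd j (X l) p - GammaB C i j l p * pd l (X k) p) = 0

/-- The vector field `X(σ) = 2x¹x²∂₁ + ((x²)² + σ(x¹)²)∂₂`. -/
def Xsigma (σ : ℝ) : Fin 2 → ℝ × ℝ → ℝ :=
  ![fun p => 2 * p.1 * p.2, fun p => p.2 ^ 2 + σ * p.1 ^ 2]

/-!
`X(σ)` is quadratic and `Γ` scales like `1/x¹`, so every term of the affine Killing equation
for `X(σ)` is homogeneous of degree `0`; in fact each component is a constant, linear in the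
`C_{ij}^k` (evaluate at `(1, 0)` to read it off). Being an affine Killing field is therefore a
linear system in `C`, solved by linear arithmetic for each `σ`.
-/

lemma pd_apply_of_hasFDerivAt {f : ℝ × ℝ → ℝ} {L : ℝ × ℝ →L[ℝ] ℝ} {p : ℝ × ℝ}
    (h : HasFDerivAt f L p) (i : Fin 2) : pd i f p = L (ee i) := by
  rw [pd, h.fderiv]

lemma pd_linear (a b : ℝ) (i : Fin 2) (p : ℝ × ℝ) :
    pd i (fun q : ℝ × ℝ => a * q.1 + b * q.2) p = a * (ee i).1 + b * (ee i).2 := by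
  rw [pd_apply_of_hasFDerivAt (f := fun q : ℝ × ℝ => a * q.1 + b * q.2)
    ((hasFDerivAt_fst.const_mul a).add (hasFDerivAt_snd.const_mul b))]
  simp

lemma pd_Xsigma_zero (s : ℝ) (i : Fin 2) :
    pd i (Xsigma s 0) = fun q => 2 * (ee i).2 * q.1 + 2 * (ee i).1 * q.2 := by
  funext p
  rw [pd_apply_of_hasFDerivAt (f := Xsigma s 0) ((hasFDerivAt_fst.const_mul 2).mul hasFDerivAt_snd)]
  simp
  ring

lemma pd_Xsigma_one (s : ℝ) (i : Fin 2) :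
    pd i (Xsigma s 1) = fun q => 2 * s * (ee i).1 * q.1 + 2 * (ee i).2 * q.2 := by
  funext p
  rw [pd_apply_of_hasFDerivAt (f := Xsigma s 1)
    ((hasFDerivAt_snd.pow 2).add ((hasFDerivAt_fst.pow 2).const_mul s))]
  simp
  ring

lemma pd_GammaB (C : Fin 2 → Fin 2 → Fin 2 → ℝ) (i j k l : Fin 2) {p : ℝ × ℝ} (hp : p.1 ≠ 0) :
    pd l (GammaB C i j k) p = -(C i j k / p.1 ^ 2) * (ee l).1 := by
  have h : HasFDerivAt (GammaB C i j k)
      ((C i j k * -(p.1 ^ 2)⁻¹) • ContinuousLinearMap.fst ℝ ℝ ℝ) p :=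
    ((hasDerivAt_inv hp).const_mul (C i j k)).comp_hasFDerivAt (𝕜 := ℝ) p hasFDerivAt_fst
  rw [pd_apply_of_hasFDerivAt h]
  simp only [smul_apply, ContinuousLinearMap.coe_fst', smul_eq_mul]
  ring

def killingDefect (C : Fin 2 → Fin 2 → Fin 2 → ℝ) (X : Fin 2 → ℝ × ℝ → ℝ) (i j k : Fin 2)
    (p : ℝ × ℝ) : ℝ :=
  pd i (pd j (X k)) p
    + ∑ l, (X l p * pd l (GammaB C i j k) p + GammaB C l j k p * pd i (X l) p
        + GammaB C i l k p * pd j (X l) p - GammaB C i j l p * pd l (X k) p)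

lemma isKillingB_iff_killingDefect (C : Fin 2 → Fin 2 → Fin 2 → ℝ) (X : Fin 2 → ℝ × ℝ → ℝ) :
    IsKillingB C X ↔ ∀ i j k p, 0 < p.1 → killingDefect C X i j k p = 0 :=
  Iff.rfl

def killingDefectXsigma (C : Fin 2 → Fin 2 → Fin 2 → ℝ) (s : ℝ) : Fin 2 → Fin 2 → Fin 2 → ℝ :=
  ![![![4 * C 0 1 0 * s - 2 * C 0 0 1,
        2 * s + 4 * C 0 1 1 * s - 2 * C 0 0 0 * s],
      ![2 + 2 * C 1 1 0 * s + 2 * C 0 0 0 - 2 * C 0 1 1,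
        2 * C 1 1 1 * s + 2 * C 0 0 1 - 2 * C 0 1 0 * s]],
    ![![2 + 2 * C 1 1 0 * s + 2 * C 0 0 0 - 2 * C 0 1 1,
        2 * C 1 1 1 * s + 2 * C 0 0 1 - 2 * C 0 1 0 * s],
      ![4 * C 0 1 0 - 2 * C 1 1 1,
        2 + 4 * C 0 1 1 - 2 * C 1 1 0 * s]]]

lemma killingDefect_Xsigma (C : Fin 2 → Fin 2 → Fin 2 → ℝ) (hC : ∀ i j k, C i j k = C j i k)
    (s : ℝ) (i j k : Fin 2) {p : ℝ × ℝ} (hp : p.1 ≠ 0) :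
    killingDefect C (Xsigma s) i j k p = killingDefectXsigma C s i j k := by
  have hX0 : Xsigma s 0 p = 2 * p.1 * p.2 := rfl
  have hX1 : Xsigma s 1 p = p.2 ^ 2 + s * p.1 ^ 2 := rfl
  fin_cases i <;> fin_cases j <;> fin_cases k <;>
  · simp only [Fin.zero_eta, Fin.mk_one, killingDefect, Fin.sum_univ_two, pd_Xsigma_zero,
      pd_Xsigma_one, pd_linear, pd_GammaB C _ _ _ _ hp, hX0, hX1, GammaB]
    simp only [killingDefectXsigma, ee, Matrix.cons_val_zero, Matrix.cons_val_one,
      Matrix.cons_val_fin_one, hC 1 0]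
    field_simp
    ring

lemma isKillingB_Xsigma_iff (C : Fin 2 → Fin 2 → Fin 2 → ℝ) (hC : ∀ i j k, C i j k = C j i k)
    (s : ℝ) : IsKillingB C (Xsigma s) ↔ ∀ i j k, killingDefectXsigma C s i j k = 0 := by
  simp only [isKillingB_iff_killingDefect]
  constructor
  · intro h i j k
    rw [← killingDefect_Xsigma C hC s i j k (p := (1, 0)) one_ne_zero]
    exact h i j k (1, 0) one_pos
  · intro h i j k p hp
    rw [killingDefect_Xsigma C hC s i j k hp.ne']
    exact h i j k

/-- characterization of when `X(σ)`, `σ ∈ {−1,0,1}`, is an affine Killing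
field of a Type B connection. -/
theorem stmt11 (C : Fin 2 → Fin 2 → Fin 2 → ℝ)
    (hC : ∀ i j k, C i j k = C j i k) :
    (IsKillingB C (Xsigma 0) ↔
      (C 0 0 1 = 0 ∧ C 0 0 0 = -(3 / 2) ∧ C 0 1 1 = -(1 / 2) ∧ C 1 1 1 = 2 * C 0 1 0)) ∧
    (IsKillingB C (Xsigma 1) ↔
      (C 0 0 0 = -1 ∧ C 0 0 1 = 0 ∧ C 0 1 0 = 0 ∧ C 0 1 1 = -1 ∧
        C 1 1 0 = -1 ∧ C 1 1 1 = 0)) ∧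
    (IsKillingB C (Xsigma (-1)) ↔
      (C 0 0 0 = -1 ∧ C 0 0 1 = 0 ∧ C 0 1 0 = 0 ∧ C 0 1 1 = -1 ∧
        C 1 1 0 = 1 ∧ C 1 1 1 = 0)) := by
  simp only [isKillingB_Xsigma_iff C hC, Fin.forall_fin_two, killingDefectXsigma,
    Matrix.cons_val_zero, Matrix.cons_val_one, Matrix.cons_val_fin_one]
  grind
end
end
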